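/- Cost subadditivity under composition: let (X, μ_X, c_X), (Y, μ_Y, c_Y), (Z, μ_Z, c_Z) be network spaces with bounded measurable cost functions, and let F_Y : X → Y, B_X : Y → X, F_Z : Y → Z, B_Y : Z → Y be Borel measurable maps satisfying (F_Y)_#μ_X = μ_Y and (B_Y)_#μ_Z = μ_Y. Then C_XZ(F_Z ∘ F_Y, B_X ∘ B_Y) ≤ C_XY(F_Y, B_X) + C_YZ(F_Z, B_Y), where C_XY(F, B) := (∫_{X×Y} (c_X(x, B(y)) − c_Y(F(x), y))² d(μ_X ⊗ μ_Y))^{1/2}, C_YZ(F, B) := (∫_{Y×Z} (c_Y(y, B(z)) − c_Z(F(y), z))² d(μ_Y ⊗ μ_Z))^{1/2}, and C_XZ(F, B) := (∫_{X×Z} (c_X(x, B(z)) − c_Z(F(x), z))² d(μ_X ⊗ μ_Z))^{1/2}. -/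

import Mathlib

open MeasureTheory
open scoped ENNReal

/-- The cost functional `C(F, B) = (∫ (c_X(x, B(y)) − c_Y(F(x), y))² d(μ ⊗ ν))^{1/2}`. -/
noncomputable def RGMcost {X Y : Type*} [MeasurableSpace X] [MeasurableSpace Y]
    (μ : Measure X) (ν : Measure Y) (cX : X → X → ℝ) (cY : Y → Y → ℝ)
    (F : X → Y) (B : Y → X) : ℝ≥0∞ :=
  (∫⁻ z, ENNReal.ofReal ((cX z.1 (B z.2) - cY (F z.1) z.2) ^ 2) ∂(μ.prod ν)) ^ (1 / 2 : ℝ)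

/-!
The integrand of `C(F, B)` is the square of the distortion
`d_{F,B}(x, y) = c_X(x, B y) − c_Y(F x, y)`, so `C(F, B)` is the `L²(μ ⊗ ν)` norm of `d_{F,B}`.
For the composite pair the distortion telescopes through `Y`:
`d_{F_Z ∘ F_Y, B_X ∘ B_Y}(x, z) = d_{F_Y, B_X}(x, B_Y z) + d_{F_Z, B_Y}(F_Y x, z)`.
Minkowski's inequality bounds the `L²(μ_X ⊗ μ_Z)` norm of the sum, and since
`(id × B_Y)_# (μ_X ⊗ μ_Z) = μ_X ⊗ μ_Y` and `(F_Y × id)_# (μ_X ⊗ μ_Z) = μ_Y ⊗ μ_Z`, the two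
summands have exactly the norms `C_XY(F_Y, B_X)` and `C_YZ(F_Z, B_Y)`.
-/

section Distortion

variable {X Y Z : Type*}

def rgmDistortion (cX : X → X → ℝ) (cY : Y → Y → ℝ) (F : X → Y) (B : Y → X) : X × Y → ℝ :=
  fun z => cX z.1 (B z.2) - cY (F z.1) z.2

theorem rgmDistortion_comp (cX : X → X → ℝ) (cY : Y → Y → ℝ) (cZ : Z → Z → ℝ)
    (FY : X → Y) (BX : Y → X) (FZ : Y → Z) (BY : Z → Y) :
    rgmDistortion cX cZ (FZ ∘ FY) (BX ∘ BY) =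
      rgmDistortion cX cY FY BX ∘ Prod.map id BY + rgmDistortion cY cZ FZ BY ∘ Prod.map FY id := by
  funext _
  exact (sub_add_sub_cancel _ _ _).symm

variable [MeasurableSpace X] [MeasurableSpace Y] [MeasurableSpace Z]

theorem RGMcost_eq_eLpNorm (μ : Measure X) (ν : Measure Y) (cX : X → X → ℝ) (cY : Y → Y → ℝ)
    (F : X → Y) (B : Y → X) :
    RGMcost μ ν cX cY F B = eLpNorm (rgmDistortion cX cY F B) 2 (μ.prod ν) := by
  rw [eLpNorm_eq_lintegral_rpow_enorm_toReal two_ne_zero ENNReal.ofNat_ne_top, RGMcost]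
  congr 2 with z
  rw [ENNReal.toReal_ofNat, ENNReal.rpow_two, Real.enorm_eq_ofReal_abs,
    ← ENNReal.ofReal_pow (abs_nonneg _), sq_abs, rgmDistortion]

theorem measurable_rgmDistortion {cX : X → X → ℝ} {cY : Y → Y → ℝ} {F : X → Y} {B : Y → X}
    (hcX : Measurable (Function.uncurry cX)) (hcY : Measurable (Function.uncurry cY))
    (hF : Measurable F) (hB : Measurable B) : Measurable (rgmDistortion cX cY F B) :=
  (hcX.comp (measurable_fst.prodMk (hB.comp measurable_snd))).sub
    (hcY.comp ((hF.comp measurable_fst).prodMk measurable_snd))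

end Distortion

theorem eLpNorm_comp_prodMap {α β γ δ E : Type*} [MeasurableSpace α] [MeasurableSpace β]
    [MeasurableSpace γ] [MeasurableSpace δ] [NormedAddCommGroup E] {p : ℝ≥0∞}
    {μ : Measure α} {ν : Measure γ} [SFinite μ] [SFinite ν] {f : α → β} {g : γ → δ}
    {u : β × δ → E} (hu : AEStronglyMeasurable u ((μ.map f).prod (ν.map g)))
    (hf : Measurable f) (hg : Measurable g) :
    eLpNorm (u ∘ Prod.map f g) p (μ.prod ν) = eLpNorm u p ((μ.map f).prod (ν.map g)) := by
  rw [Measure.map_prod_map μ ν hf hg] at hu ⊢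
  exact (eLpNorm_map_measure hu (hf.prodMap hg).aemeasurable).symm

theorem RGMcost_comp_le {X Y Z : Type*} [MeasurableSpace X] [MeasurableSpace Y]
    [MeasurableSpace Z] {μX : Measure X} {μY : Measure Y} {μZ : Measure Z}
    [SFinite μX] [SFinite μZ] {cX : X → X → ℝ} {cY : Y → Y → ℝ} {cZ : Z → Z → ℝ}
    (hcX : Measurable (Function.uncurry cX)) (hcY : Measurable (Function.uncurry cY))
    (hcZ : Measurable (Function.uncurry cZ))
    {FY : X → Y} {BX : Y → X} {FZ : Y → Z} {BY : Z → Y}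
    (hFY : Measurable FY) (hBX : Measurable BX) (hFZ : Measurable FZ) (hBY : Measurable BY)
    (hFYpush : μX.map FY = μY) (hBYpush : μZ.map BY = μY) :
    RGMcost μX μZ cX cZ (FZ ∘ FY) (BX ∘ BY) ≤
      RGMcost μX μY cX cY FY BX + RGMcost μY μZ cY cZ FZ BY := by
  have hXY := measurable_rgmDistortion hcX hcY hFY hBX
  have hYZ := measurable_rgmDistortion hcY hcZ hFZ hBY
  have hXZ_XY : μX.prod μY = (μX.map id).prod (μZ.map BY) := by rw [Measure.map_id, hBYpush]
  have hXZ_YZ : μY.prod μZ = (μX.map FY).prod (μZ.map id) := by rw [Measure.map_id, hFYpush]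
  simp only [RGMcost_eq_eLpNorm]
  rw [rgmDistortion_comp cX cY cZ]
  calc eLpNorm (rgmDistortion cX cY FY BX ∘ Prod.map id BY
          + rgmDistortion cY cZ FZ BY ∘ Prod.map FY id) 2 (μX.prod μZ)
      ≤ eLpNorm (rgmDistortion cX cY FY BX ∘ Prod.map id BY) 2 (μX.prod μZ)
          + eLpNorm (rgmDistortion cY cZ FZ BY ∘ Prod.map FY id) 2 (μX.prod μZ) :=
        eLpNorm_add_le (hXY.comp (measurable_id.prodMap hBY)).aestronglyMeasurable
          (hYZ.comp (hFY.prodMap measurable_id)).aestronglyMeasurable one_le_two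
    _ = _ := by
        rw [eLpNorm_comp_prodMap hXY.aestronglyMeasurable measurable_id hBY,
          eLpNorm_comp_prodMap hYZ.aestronglyMeasurable hFY measurable_id, hXZ_XY, hXZ_YZ]

theorem rgm_cost_subadditive_general
    {X Y Z : Type*}
    [MeasurableSpace X]
    [MeasurableSpace Y]
    [MeasurableSpace Z]
    (μX : Measure X) (μY : Measure Y) (μZ : Measure Z)
    [IsProbabilityMeasure μX] [IsProbabilityMeasure μZ]
    (cX : X → X → ℝ) (cY : Y → Y → ℝ) (cZ : Z → Z → ℝ)
    (hcX : Measurable (Function.uncurry cX)) (hcY : Measurable (Function.uncurry cY))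
    (hcZ : Measurable (Function.uncurry cZ))
    (FY : X → Y) (BX : Y → X) (FZ : Y → Z) (BY : Z → Y)
    (hFY : Measurable FY) (hBX : Measurable BX) (hFZ : Measurable FZ) (hBY : Measurable BY)
    (hFYpush : μX.map FY = μY) (hBYpush : μZ.map BY = μY) :
    RGMcost μX μZ cX cZ (FZ ∘ FY) (BX ∘ BY) ≤
      RGMcost μX μY cX cY FY BX + RGMcost μY μZ cY cZ FZ BY :=
  RGMcost_comp_le hcX hcY hcZ hFY hBX hFZ hBY hFYpush hBYpush

/-- Cost subadditivity under composition:
`C_XZ(F_Z ∘ F_Y, B_X ∘ B_Y) ≤ C_XY(F_Y, B_X) + C_YZ(F_Z, B_Y)` whenever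
`(F_Y)_# μ_X = μ_Y` and `(B_Y)_# μ_Z = μ_Y`, for bounded measurable costs. -/
theorem rgm_cost_subadditive
    {X Y Z : Type*}
    [MetricSpace X] [CompleteSpace X] [SecondCountableTopology X]
    [MeasurableSpace X] [BorelSpace X]
    [MetricSpace Y] [CompleteSpace Y] [SecondCountableTopology Y]
    [MeasurableSpace Y] [BorelSpace Y]
    [MetricSpace Z] [CompleteSpace Z] [SecondCountableTopology Z]
    [MeasurableSpace Z] [BorelSpace Z]
    (μX : Measure X) (μY : Measure Y) (μZ : Measure Z)
    [IsProbabilityMeasure μX] [IsProbabilityMeasure μY] [IsProbabilityMeasure μZ]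
    [μX.IsOpenPosMeasure] [μY.IsOpenPosMeasure] [μZ.IsOpenPosMeasure]
    (cX : X → X → ℝ) (cY : Y → Y → ℝ) (cZ : Z → Z → ℝ)
    (hcX : Measurable (Function.uncurry cX)) (hcY : Measurable (Function.uncurry cY))
    (hcZ : Measurable (Function.uncurry cZ))
    (MX MY MZ : ℝ)
    (hbX : ∀ x x', |cX x x'| ≤ MX) (hbY : ∀ y y', |cY y y'| ≤ MY)
    (hbZ : ∀ z z', |cZ z z'| ≤ MZ)
    (FY : X → Y) (BX : Y → X) (FZ : Y → Z) (BY : Z → Y)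
    (hFY : Measurable FY) (hBX : Measurable BX) (hFZ : Measurable FZ) (hBY : Measurable BY)
    (hFYpush : μX.map FY = μY) (hBYpush : μZ.map BY = μY) :
    RGMcost μX μZ cX cZ (FZ ∘ FY) (BX ∘ BY) ≤
      RGMcost μX μY cX cY FY BX + RGMcost μY μZ cY cZ FZ BY :=
  rgm_cost_subadditive_general μX μY μZ cX cY cZ hcX hcY hcZ FY BX FZ BY hFY hBX hFZ hBY hFYpush
    hBYpush
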